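/- arXiv:2401.09845 — 4 statements merged into one kernel-verified Lean document; each statement's English description precedes it below -/
import Mathlib

section
/- Let 𝒩 be the collection of all nonempty subsets of the finite nonempty set N. Then 𝒩 has full span: the family of MM-games {w_S}_{S∈𝒩} is a basis of ℝ^𝒩. -/
/-!
Since `w_S(T) = 1 - [S ⊆ N ∖ T]`, a relation `∑_S c_S w_S = 0`, with `c` extended to all
subsets by `c_∅ = 0`, says that `∑_{S ⊆ A} c_S = ∑_S c_S` for every `A ≠ N`. Taking
`A = ∅` shows that all these sums vanish, and Möbius inversion on the Boolean lattice gives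
`c = 0`. There are as many MM-games as coordinates, so independence already gives a basis.
-/

open Finset
open scoped Classical

/-! Common definitions: games on a collection `C` of coalitions of a finite
player set `N`, MM-games, full span, assignments, representations, the
equitable solution, and the Shapley value. -/

/-- The MM-game `w_S`, as a vector in `ℝ^C`:
`w_S(T) = 1` if `S` meets `T` (i.e. `S ∩ T ≠ ∅`) and `0` if `S` misses `T`. -/
noncomputable def mmGame {N : Type} [DecidableEq N] (C : Finset (Finset N))
    (S : Finset N) : {T : Finset N // T ∈ C} → ℝ :=
  fun T => if (S ∩ T.1).Nonempty then 1 else 0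

/-- `C` has full span: the family of MM-games `{w_S}_{S ∈ C}` is a basis of `ℝ^C`,
i.e. it is linearly independent and spans `ℝ^C`. -/
def FullSpan {N : Type} [DecidableEq N] (C : Finset (Finset N)) : Prop :=
  LinearIndependent ℝ (fun S : {S : Finset N // S ∈ C} => mmGame C S.1) ∧
  Submodule.span ℝ (Set.range fun S : {S : Finset N // S ∈ C} => mmGame C S.1) = ⊤

/-- The full user-set `ψ⁻¹(k) = {n ∈ N : k ∈ ψ(n)}` of facility `k`. -/
noncomputable def userSet {N K : Type} [Fintype N] (ψ : N → Finset K) (k : K) :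
    Finset N :=
  Finset.univ.filter fun n => k ∈ ψ n

/-- `(ψ, γ)` is a representation of the game `v : C → ℝ`.  The set of facilities
is `K = ψ(N) = ⋃_{n ∈ N} ψ(n)` (every facility has a nonempty full user-set);
we require `ψ⁻¹(k) ∈ C` for every facility `k`, and
`v(S) = ∑_{k ∈ ψ(S)} γ(k)` for every `S ∈ C`, where `ψ(S) = ⋃_{n ∈ S} ψ(n)`. -/
def IsRep {N : Type} [Fintype N] [DecidableEq N] (C : Finset (Finset N))
    (v : {T : Finset N // T ∈ C} → ℝ) {K : Type} (ψ : N → Finset K)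
    (γ : K → ℝ) : Prop :=
  (∀ k ∈ Finset.univ.biUnion ψ, userSet ψ k ∈ C) ∧
  ∀ T : {T : Finset N // T ∈ C}, v T = ∑ k ∈ T.1.biUnion ψ, γ k

/-- The equitable solution `τ(ψ, γ) ∈ ℝ^N`:
`τ_n(ψ,γ) = ∑_{k ∈ ψ(n)} γ(k)/|ψ⁻¹(k)|`. -/
noncomputable def tau {N K : Type} [Fintype N] (ψ : N → Finset K) (γ : K → ℝ)
    (n : N) : ℝ :=
  ∑ k ∈ ψ n, γ k / ((userSet ψ k).card : ℝ)

/-- The Shapley value `φ_n(v)` of a game on all coalitions of `N`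
(`v ∅` is understood to be `0`):
`φ_n(v) = ∑_{S ⊆ N∖{n}} (|S|!(|N|−1−|S|)!/|N|!)·(v(S∪{n}) − v(S))`. -/
noncomputable def shapley {N : Type} [Fintype N] [DecidableEq N]
    (v : Finset N → ℝ) (n : N) : ℝ :=
  ∑ S ∈ (Finset.univ.erase n).powerset,
    ((S.card.factorial : ℝ) * ((Fintype.card N - 1 - S.card).factorial : ℝ) /
      ((Fintype.card N).factorial : ℝ)) * (v (insert n S) - v S)

/-- `C` is a semi-algebra: `N ∈ C`, and `N∖S ∈ C` for every `S ∈ C` with `S ≠ N`. -/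
def IsSemiAlgebra {N : Type} [Fintype N] [DecidableEq N]
    (C : Finset (Finset N)) : Prop :=
  Finset.univ ∈ C ∧ ∀ S ∈ C, S ≠ Finset.univ → Finset.univ \ S ∈ C

/-- `C` is hierarchical: its elements can be arranged in a sequence
`S_1, …, S_l` such that for every `k = 2, …, l`, (i) `S_1` meets `S_k`, and
(ii) some `T ∈ C` misses `S_k` and meets each of `S_1, …, S_{k−1}`.
(Indices are `0, …, l-1` here, with `S_1` the element of index `0`.) -/
def IsHierarchy {N : Type} [DecidableEq N] (C : Finset (Finset N)) : Prop :=
  ∃ (l : ℕ) (hl : 0 < l) (S : Fin l → Finset N),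
    Function.Injective S ∧ (∀ k, S k ∈ C) ∧ (∀ T ∈ C, ∃ k, S k = T) ∧
    ∀ k : Fin l, 0 < (k : ℕ) →
      ((S ⟨0, hl⟩ ∩ S k).Nonempty ∧
       ∃ T ∈ C, T ∩ S k = ∅ ∧
         ∀ j : Fin l, (j : ℕ) < (k : ℕ) → (T ∩ S j).Nonempty)

/-- Players `i` and `j` are symmetric in the game `v : C → ℝ`. -/
def SymmetricPlayers {N : Type} [DecidableEq N] (C : Finset (Finset N))
    (v : {T : Finset N // T ∈ C} → ℝ) (i j : N) : Prop :=
  ∀ T : Finset N, i ∉ T → j ∉ T →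
    (insert i T ∈ C ↔ insert j T ∈ C) ∧
    ∀ (hi : insert i T ∈ C) (hj : insert j T ∈ C),
      v ⟨insert i T, hi⟩ = v ⟨insert j T, hj⟩

/-- Player `i` is a dummy in the game `v : C → ℝ`. -/
def DummyPlayer {N : Type} [DecidableEq N] (C : Finset (Finset N))
    (v : {T : Finset N // T ∈ C} → ℝ) (i : N) : Prop :=
  (∀ h : ({i} : Finset N) ∈ C, v ⟨{i}, h⟩ = 0) ∧
  ∀ T : Finset N, T.Nonempty → i ∉ T →
    (insert i T ∈ C ↔ T ∈ C) ∧
    ∀ (hiT : insert i T ∈ C) (hT : T ∈ C), v ⟨insert i T, hiT⟩ = v ⟨T, hT⟩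


namespace Finset

variable {α : Type*} [DecidableEq α]

theorem eq_zero_of_sum_powerset_eq_zero {R : Type*} [Ring R] {g : Finset α → R}
    (h : ∀ A : Finset α, ∑ S ∈ A.powerset, g S = 0) : g = 0 := by
  funext A
  simpa using
    IncidenceAlgebra.moebius_inversion_bot g 0 (fun A => by simp [Iic_eq_powerset, h]) A

theorem sum_filter_inter_nonempty [Fintype α] {M : Type*} [AddCommGroup M]
    (g : Finset α → M) (T : Finset α) :
    ∑ S with (S ∩ T).Nonempty, g S = ∑ S, g S - ∑ S ∈ Tᶜ.powerset, g S := by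
  have hmiss : ({S | ¬(S ∩ T).Nonempty} : Finset (Finset α)) = Tᶜ.powerset := by
    ext S
    simp [not_nonempty_iff_eq_empty, ← disjoint_iff_inter_eq_empty,
      subset_compl_iff_disjoint_right]
  rw [← sum_filter_add_sum_filter_not univ (fun S => (S ∩ T).Nonempty) g, hmiss,
    add_sub_cancel_right]

end Finset

theorem linearIndependent_mmGame_nonempty {N : Type} [Fintype N] [DecidableEq N] [Nonempty N] :
    LinearIndependent ℝ fun S : {S : Finset N // S ∈ univ.filter Finset.Nonempty} =>
      mmGame (univ.filter Finset.Nonempty) S.1 := by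
  set C : Finset (Finset N) := univ.filter Finset.Nonempty
  rw [Fintype.linearIndependent_iff]
  intro c hc
  let g : Finset N → ℝ := fun S => if h : S ∈ C then c ⟨S, h⟩ else 0
  have hg_empty : g ∅ = 0 := by simp [g, C]
  have hmeet (T : Finset N) (hT : T.Nonempty) : ∑ S with (S ∩ T).Nonempty, g S = 0 := by
    have hfilter :
        ({S | (S ∩ T).Nonempty} : Finset (Finset N)) = {S ∈ C | (S ∩ T).Nonempty} := by
      ext S
      simpa [C] using fun h : (S ∩ T).Nonempty => h.mono inter_subset_left
    rw [hfilter, sum_filter, ← sum_coe_sort]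
    simpa [g, mmGame] using congrFun hc ⟨T, by simpa [C] using hT⟩
  have htotal : ∑ S, g S = 0 := by
    have := hmeet univ univ_nonempty
    rwa [sum_filter_inter_nonempty, compl_univ, powerset_empty, sum_singleton, hg_empty,
      sub_zero] at this
  have hpowerset (A : Finset N) : ∑ S ∈ A.powerset, g S = 0 := by
    obtain rfl | hA := eq_or_ne A univ
    · rwa [powerset_univ]
    · have := hmeet Aᶜ (by simpa [nonempty_iff_ne_empty] using hA)
      rwa [sum_filter_inter_nonempty, compl_compl, htotal, zero_sub, neg_eq_zero] at this
  intro S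
  simpa [g] using congrFun (eq_zero_of_sum_powerset_eq_zero hpowerset) S.1

theorem fullSpan_of_linearIndependent {N : Type} [DecidableEq N] {C : Finset (Finset N)}
    (h : LinearIndependent ℝ fun S : {S : Finset N // S ∈ C} => mmGame C S.1) :
    FullSpan C :=
  ⟨h, h.span_eq_top_of_card_eq_finrank' (by simp [Module.finrank_fintype_fun_eq_card])⟩

/-- The collection `𝒩` of all nonempty subsets of `N` has full span. -/
theorem allCoalitions_fullSpan {N : Type} [Fintype N] [DecidableEq N]
    [Nonempty N] :
    FullSpan (Finset.univ.filter fun S : Finset N => S.Nonempty) :=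
  fullSpan_of_linearIndependent linearIndependent_mmGame_nonempty
end

section
/- Assume C has full span. Then the equitable solution is invariant across all representations of a game: if (ψ, γ) and (ψ', γ') are both representations of the same game v : C → ℝ, then τ(ψ, γ) = τ(ψ', γ') in ℝ^N. -/
open Finset
open scoped Classical

/-! Each facility `k` of a representation contributes `γ(k)` times the MM-game of its user set
`ψ⁻¹(k)` to `v`, and `γ(k)/|ψ⁻¹(k)|` to each user's share in `τ`. Grouping facilities by user
set, both are determined by the total weight `d(S)` (`coalitionWeight`) of the facilities with
user set `S ∈ C`: `v = ∑_S d(S) w_S` and `τ_n = ∑_{S ∋ n} d(S)/|S|`. Full span makes the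
coefficients `d` of `v` unique, hence `τ` is unique too. -/

section Representation

variable {N K : Type} [Fintype N]

theorem mem_userSet_iff {ψ : N → Finset K} {k : K} {n : N} : n ∈ userSet ψ k ↔ k ∈ ψ n := by
  simp [userSet]

variable [DecidableEq N]

noncomputable def coalitionWeight (ψ : N → Finset K) (γ : K → ℝ) (S : Finset N) : ℝ :=
  ∑ k ∈ univ.biUnion ψ with userSet ψ k = S, γ k

theorem sum_mul_userSet_eq_sum_coalitionWeight_mul {C : Finset (Finset N)} {ψ : N → Finset K}
    (hψC : ∀ k ∈ univ.biUnion ψ, userSet ψ k ∈ C) (γ : K → ℝ) (f : Finset N → ℝ) :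
    ∑ k ∈ univ.biUnion ψ, γ k * f (userSet ψ k) = ∑ S ∈ C, coalitionWeight ψ γ S * f S := by
  rw [← sum_fiberwise_of_maps_to hψC]
  refine sum_congr rfl fun S _ => ?_
  rw [coalitionWeight, sum_mul]
  exact sum_congr rfl fun k hk => by rw [(mem_filter.mp hk).2]

theorem sum_biUnion_eq_sum_mul_mmGame (C : Finset (Finset N)) (ψ : N → Finset K) (γ : K → ℝ)
    (T : {T : Finset N // T ∈ C}) :
    ∑ k ∈ T.1.biUnion ψ, γ k = ∑ k ∈ univ.biUnion ψ, γ k * mmGame C (userSet ψ k) T := by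
  have hfacilities : T.1.biUnion ψ = {k ∈ univ.biUnion ψ | (userSet ψ k ∩ T.1).Nonempty} := by
    ext k
    simp only [mem_biUnion, mem_filter, mem_univ, true_and, Finset.Nonempty, mem_inter,
      mem_userSet_iff]
    exact ⟨fun ⟨n, hn, hk⟩ => ⟨⟨n, hk⟩, n, hk, hn⟩, fun ⟨_, n, hk, hn⟩ => ⟨n, hn, hk⟩⟩
  simp only [hfacilities, sum_filter, mmGame, mul_ite, mul_one, mul_zero]

theorem tau_eq_sum_mul_share (ψ : N → Finset K) (γ : K → ℝ) (n : N) :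
    tau ψ γ n = ∑ k ∈ univ.biUnion ψ,
      γ k * if n ∈ userSet ψ k then ((userSet ψ k).card : ℝ)⁻¹ else 0 := by
  have hfacilities : ψ n = {k ∈ univ.biUnion ψ | n ∈ userSet ψ k} := by
    ext k
    simp only [mem_filter, mem_biUnion, mem_univ, true_and, mem_userSet_iff]
    exact ⟨fun hk => ⟨⟨n, hk⟩, hk⟩, And.right⟩
  simp only [tau, hfacilities, sum_filter, mul_ite, mul_zero, div_eq_mul_inv]

variable {C : Finset (Finset N)} {v : {T : Finset N // T ∈ C} → ℝ} {ψ : N → Finset K}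
  {γ : K → ℝ}

theorem IsRep.eq_sum_coalitionWeight_smul_mmGame (h : IsRep C v ψ γ) :
    v = ∑ S : {S : Finset N // S ∈ C}, coalitionWeight ψ γ S • mmGame C S := by
  funext T
  rw [h.2 T, sum_biUnion_eq_sum_mul_mmGame C ψ γ T,
    sum_mul_userSet_eq_sum_coalitionWeight_mul h.1 γ fun S => mmGame C S T, Finset.sum_apply,
    ← sum_coe_sort C]
  simp only [Pi.smul_apply, smul_eq_mul]

theorem IsRep.tau_eq_sum_coalitionWeight (h : IsRep C v ψ γ) (n : N) :
    tau ψ γ n = ∑ S ∈ C, coalitionWeight ψ γ S * if n ∈ S then (S.card : ℝ)⁻¹ else 0 := by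
  rw [tau_eq_sum_mul_share, sum_mul_userSet_eq_sum_coalitionWeight_mul h.1 γ
    fun S => if n ∈ S then (S.card : ℝ)⁻¹ else 0]

theorem IsRep.coalitionWeight_eq {K' : Type} {ψ' : N → Finset K'} {γ' : K' → ℝ}
    (hli : LinearIndependent ℝ fun S : {S : Finset N // S ∈ C} => mmGame C S.1)
    (h : IsRep C v ψ γ) (h' : IsRep C v ψ' γ') {S : Finset N} (hS : S ∈ C) :
    coalitionWeight ψ γ S = coalitionWeight ψ' γ' S :=
  Fintype.linearIndependent_iffₛ.mp hli (fun S => coalitionWeight ψ γ S)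
    (fun S => coalitionWeight ψ' γ' S)
    (h.eq_sum_coalitionWeight_smul_mmGame.symm.trans h'.eq_sum_coalitionWeight_smul_mmGame)
    ⟨S, hS⟩

end Representation

theorem equitable_solution_invariant_general {N : Type} [Fintype N] [DecidableEq N]
    (C : Finset (Finset N))
    (hfs : FullSpan C) (v : {T : Finset N // T ∈ C} → ℝ)
    {K K' : Type} (ψ : N → Finset K) (γ : K → ℝ)
    (ψ' : N → Finset K') (γ' : K' → ℝ)
    (h : IsRep C v ψ γ) (h' : IsRep C v ψ' γ') :
    ∀ n : N, tau ψ γ n = tau ψ' γ' n := by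
  intro n
  rw [h.tau_eq_sum_coalitionWeight, h'.tau_eq_sum_coalitionWeight]
  exact sum_congr rfl fun S hS => by rw [h.coalitionWeight_eq hfs.1 h' hS]

/-- If `C` has full span, the equitable solution is invariant
across all representations of a game `v : C → ℝ`. -/
theorem equitable_solution_invariant {N : Type} [Fintype N] [DecidableEq N]
    [Nonempty N] (C : Finset (Finset N)) (hCne : C.Nonempty)
    (hmem : ∀ S ∈ C, S.Nonempty) (hcover : ∀ n : N, ∃ S ∈ C, n ∈ S)
    (hfs : FullSpan C) (v : {T : Finset N // T ∈ C} → ℝ)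
    {K K' : Type} (ψ : N → Finset K) (γ : K → ℝ)
    (ψ' : N → Finset K') (γ' : K' → ℝ)
    (h : IsRep C v ψ γ) (h' : IsRep C v ψ' γ') :
    ∀ n : N, tau ψ γ n = tau ψ' γ' n :=
  equitable_solution_invariant_general C hfs v ψ γ ψ' γ' h h'
end

section
/- In the canonical case C = 𝒩 (all nonempty subsets of N), for every game v : 𝒩 → ℝ and every representation (ψ, γ) of v, the equitable solution equals the Shapley value: τ_n(ψ, γ) = φ_n(v) for every n ∈ N. -/
open Finset
open scoped Classical

/-! Writing `U_k = ψ⁻¹(k)` and `w_T` for the game `S ↦ [S meets T]`, a representation says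
`v = ∑_k γ(k) w_{U_k}`, and both the Shapley value and `τ` are linear in `γ`. For `i ∈ T`, the
marginal contribution of `i` to `S ⊆ N ∖ {i}` in `w_T` is `1` exactly when `S ⊆ N ∖ T`, and the
Shapley weights of the subsets of a set of size `|N| - |T|` add up to `1/|T|` (a hockey-stick
identity). So `φ(w_T)` splits one unit equally among the members of `T`, which is `τ`. -/

open Nat

theorem Nat.choose_mul_factorial_mul_factorial_add_sub {m j : ℕ} (w : ℕ) (hj : j ≤ m) :
    m.choose j * j ! * (m + w - j)! = m ! * w ! * (m - j + w).choose w := by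
  obtain ⟨r, rfl⟩ := Nat.exists_eq_add_of_le hj
  rw [show j + r + w - j = r + w by omega, Nat.add_sub_cancel_left]
  have hm : (j + r).choose j * j ! * r ! = (j + r)! := by
    simpa using choose_mul_factorial_mul_factorial (Nat.le_add_right j r)
  apply Nat.eq_of_mul_eq_mul_right (factorial_pos r)
  calc (j + r).choose j * j ! * (r + w)! * r !
      = (j + r).choose j * j ! * r ! * (r + w)! := by ring
    _ = (j + r)! * ((r + w).choose w * r ! * w !) := by
      rw [hm, add_choose_mul_factorial_mul_factorial]
    _ = (j + r)! * w ! * (r + w).choose w * r ! := by ring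

theorem Nat.sum_range_choose_mul_factorial_mul_factorial (m w : ℕ) :
    ∑ j ∈ range (m + 1), m.choose j * j ! * (m + w - j)! * (w + 1) = (m + w + 1)! :=
  calc ∑ j ∈ range (m + 1), m.choose j * j ! * (m + w - j)! * (w + 1)
      = ∑ j ∈ range (m + 1), m ! * (w + 1)! * (m + 1 - 1 - j + w).choose w := by
        refine sum_congr rfl fun j hj => ?_
        rw [choose_mul_factorial_mul_factorial_add_sub w (mem_range_succ_iff.mp hj),
          factorial_succ, Nat.add_sub_cancel]
        ring
    _ = m ! * (w + 1)! * (m + w + 1).choose (w + 1) := by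
        rw [← mul_sum, sum_range_reflect (fun i => (i + w).choose w), sum_range_add_choose]
    _ = (m + w + 1)! := by
        rw [add_assoc, ← add_choose_mul_factorial_mul_factorial m (w + 1)]
        ring

noncomputable def shapleyWeight (n s : ℕ) : ℝ := (s ! * (n - 1 - s)! : ℝ) / n !

theorem sum_powerset_shapleyWeight {α : Type*} (D : Finset α) {u : ℕ} (hu : 0 < u) :
    ∑ S ∈ D.powerset, shapleyWeight (#D + u) #S = 1 / u := by
  obtain ⟨w, rfl⟩ := Nat.exists_eq_add_of_lt hu
  have key := Nat.sum_range_choose_mul_factorial_mul_factorial #D w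
  rw [sum_powerset_apply_card]
  simp only [shapleyWeight, zero_add, nsmul_eq_mul, show #D + (w + 1) - 1 = #D + w by omega]
  simp_rw [← mul_div_assoc, ← sum_div]
  rw [div_eq_div_iff (by positivity) (by positivity), one_mul, ← add_assoc, ← key, Nat.cast_sum,
    sum_mul]
  refine sum_congr rfl fun j _ => ?_
  push_cast
  ring

theorem mem_userSet {N K : Type} [Fintype N] {ψ : N → Finset K} {k : K} {n : N} :
    n ∈ userSet ψ k ↔ k ∈ ψ n := by
  simp [userSet]

section Games

variable {N : Type} [DecidableEq N]

/-- The MM-game `w_T` of the paper, i.e. `mmGame` on all coalitions. -/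
noncomputable def meetGame (T S : Finset N) : ℝ := if Disjoint T S then 0 else 1

theorem meetGame_insert_sub_meetGame (T S : Finset N) (i : N) :
    meetGame T (insert i S) - meetGame T S = if i ∈ T ∧ Disjoint T S then 1 else 0 := by
  by_cases hS : Disjoint T S <;> by_cases hi : i ∈ T <;>
    simp [meetGame, hS, hi, disjoint_insert_right]

variable [Fintype N]

theorem shapley_sum_mul {ι : Type*} (s : Finset ι) (c : ι → ℝ) (f : ι → Finset N → ℝ) (i : N) :
    shapley (fun S => ∑ k ∈ s, c k * f k S) i = ∑ k ∈ s, c k * shapley (f k) i := by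
  simp only [shapley, mul_sum, ← sum_sub_distrib, ← mul_sub]
  rw [sum_comm]
  exact sum_congr rfl fun k _ => sum_congr rfl fun S _ => by ring

theorem shapley_meetGame (T : Finset N) (i : N) :
    shapley (meetGame T) i = if i ∈ T then 1 / (#T : ℝ) else 0 := by
  split_ifs with hi
  · have hpow : {S ∈ (univ.erase i).powerset | Disjoint T S} = (univ \ T).powerset := by
      ext S
      simp only [mem_filter, mem_powerset, subset_iff, mem_erase, mem_sdiff, mem_univ, true_and,
        and_true, disjoint_right]
      exact ⟨fun h x hx => h.2 hx, fun h => ⟨fun x hx hxi => h hx (hxi ▸ hi), h⟩⟩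
    calc shapley (meetGame T) i
        = ∑ S ∈ (univ.erase i).powerset,
            if Disjoint T S then shapleyWeight (Fintype.card N) #S else 0 := by
          simp only [shapley, meetGame_insert_sub_meetGame, hi, true_and, mul_ite, mul_one,
            mul_zero]
          rfl
      _ = ∑ S ∈ (univ \ T).powerset, shapleyWeight (#(univ \ T) + #T) #S := by
          rw [← sum_filter, hpow, card_sdiff_add_card_eq_card (subset_univ T), Finset.card_univ]
      _ = 1 / (#T : ℝ) := sum_powerset_shapleyWeight _ (card_pos.mpr ⟨i, hi⟩)
  · simp [shapley, meetGame_insert_sub_meetGame, hi]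

theorem sum_biUnion_eq_sum_mul_meetGame {K : Type} (ψ : N → Finset K) (γ : K → ℝ)
    (S : Finset N) :
    ∑ k ∈ S.biUnion ψ, γ k = ∑ k ∈ univ.biUnion ψ, γ k * meetGame (userSet ψ k) S := by
  have hmeet : ∀ k, ¬ Disjoint (userSet ψ k) S ↔ k ∈ S.biUnion ψ := by
    simp [disjoint_left, mem_userSet, mem_biUnion, and_comm]
  simp only [meetGame, mul_ite, mul_zero, mul_one, sum_ite, sum_const_zero, zero_add]
  refine sum_congr (ext fun k => ?_) fun _ _ => rfl
  rw [mem_filter, hmeet,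
    and_iff_right_of_imp (biUnion_subset_biUnion_of_subset_left ψ (subset_univ S) ·)]

end Games

theorem equitable_eq_shapley_general {N : Type} [Fintype N] [DecidableEq N]
    (v : Finset N → ℝ) (hv0 : v ∅ = 0)
    {K : Type} (ψ : N → Finset K) (γ : K → ℝ)
    (hrep : ∀ S : Finset N, S.Nonempty → v S = ∑ k ∈ S.biUnion ψ, γ k) :
    ∀ n : N, tau ψ γ n = shapley v n := by
  intro n
  have hv : v = fun S => ∑ k ∈ univ.biUnion ψ, γ k * meetGame (userSet ψ k) S := by
    funext S
    rw [← sum_biUnion_eq_sum_mul_meetGame]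
    rcases S.eq_empty_or_nonempty with rfl | hS
    · simp [hv0]
    · exact hrep S hS
  rw [tau, hv, shapley_sum_mul]
  simp only [shapley_meetGame, mem_userSet, mul_ite, mul_one_div, mul_zero, sum_ite_mem,
    inter_eq_right.mpr (subset_biUnion_of_mem ψ (mem_univ n))]

/-- In the canonical case `C = 𝒩` (all nonempty subsets of `N`),
for every game `v : 𝒩 → ℝ` (with the convention `v ∅ = 0`) and every
representation `(ψ, γ)` of `v`, the equitable solution equals the Shapley
value: `τ_n(ψ, γ) = φ_n(v)` for every `n ∈ N`. -/
theorem equitable_eq_shapley {N : Type} [Fintype N] [DecidableEq N]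
    [Nonempty N] (v : Finset N → ℝ) (hv0 : v ∅ = 0)
    {K : Type} (ψ : N → Finset K) (γ : K → ℝ)
    (hrep : ∀ S : Finset N, S.Nonempty → v S = ∑ k ∈ S.biUnion ψ, γ k) :
    ∀ n : N, tau ψ γ n = shapley v n :=
  equitable_eq_shapley_general v hv0 ψ γ hrep
end

section
/- Every game v : C → ℝ has a representation if and only if C has full span (i.e., the family {w_S}_{S∈C} is a basis of ℝ^C). -/
open Finset
open scoped Classical

/-!
Read facility by facility, a representation `(ψ, γ)` says `v = ∑ₖ γ(k) · w_{ψ⁻¹(k)}`,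
since facility `k` is counted in `v(T)` exactly when its user-set meets `T`.  So the games
with a representation are precisely the linear combinations of MM-games (conversely, take the
coalitions of `C` themselves as facilities), and every game has one iff the `|C|` MM-games
span `ℝ^C`, i.e. form a basis of it.
-/

theorem fullSpan_iff_span_mmGame_eq_top {N : Type} [DecidableEq N] (C : Finset (Finset N)) :
    FullSpan C ↔
      Submodule.span ℝ (Set.range fun S : {S : Finset N // S ∈ C} => mmGame C S.1) = ⊤ :=
  ⟨And.right, fun h => ⟨linearIndependent_of_top_le_span_of_card_eq_finrank h.ge
    (by simp [Module.finrank_fintype_fun_eq_card]), h⟩⟩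

section Representation

variable {N K : Type} [Fintype N] [DecidableEq N]

theorem mem_biUnion_iff_userSet_meets (ψ : N → Finset K) (T : Finset N) (k : K) :
    k ∈ T.biUnion ψ ↔ (userSet ψ k ∩ T).Nonempty := by
  simp only [Finset.mem_biUnion, Finset.Nonempty, Finset.mem_inter, userSet,
    Finset.mem_filter, Finset.mem_univ, true_and]
  exact exists_congr fun _ => and_comm

theorem sum_biUnion_eq_sum_mmGame (C : Finset (Finset N)) (ψ : N → Finset K) (γ : K → ℝ)
    (T : {T : Finset N // T ∈ C}) :
    ∑ k ∈ T.1.biUnion ψ, γ k = (∑ k ∈ univ.biUnion ψ, γ k • mmGame C (userSet ψ k)) T := by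
  simp only [Finset.sum_apply, Pi.smul_apply, mmGame, smul_eq_mul, mul_ite, mul_one,
    mul_zero, ← Finset.sum_filter]
  refine Finset.sum_congr (Finset.ext fun k => ?_) fun _ _ => rfl
  rw [Finset.mem_filter, ← mem_biUnion_iff_userSet_meets]
  exact ⟨fun hk => ⟨Finset.biUnion_subset_biUnion_of_subset_left ψ (subset_univ T.1) hk, hk⟩,
    And.right⟩

theorem IsRep.mem_span_mmGame {C : Finset (Finset N)} {v : {T : Finset N // T ∈ C} → ℝ}
    {ψ : N → Finset K} {γ : K → ℝ} (h : IsRep C v ψ γ) :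
    v ∈ Submodule.span ℝ (Set.range fun S : {S : Finset N // S ∈ C} => mmGame C S.1) := by
  obtain ⟨huser, hv⟩ := h
  rw [show v = ∑ k ∈ univ.biUnion ψ, γ k • mmGame C (userSet ψ k) from
    funext fun T => (hv T).trans (sum_biUnion_eq_sum_mmGame C ψ γ T)]
  exact Submodule.sum_mem _ fun k hk =>
    Submodule.smul_mem _ _ (Submodule.subset_span ⟨⟨userSet ψ k, huser k hk⟩, rfl⟩)

noncomputable def coalitionAssignment (C : Finset (Finset N)) (n : N) :
    Finset {S : Finset N // S ∈ C} :=
  univ.filter fun S => n ∈ S.1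

theorem userSet_coalitionAssignment (C : Finset (Finset N)) (S : {S : Finset N // S ∈ C}) :
    userSet (coalitionAssignment C) S = S.1 := by
  ext n
  simp [userSet, coalitionAssignment]

theorem isRep_coalitionAssignment (C : Finset (Finset N)) (c : {S : Finset N // S ∈ C} → ℝ) :
    IsRep C (∑ S, c S • mmGame C S.1) (coalitionAssignment C) c := by
  refine ⟨fun S _ => (userSet_coalitionAssignment C S).symm ▸ S.2, fun T => ?_⟩
  rw [sum_biUnion_eq_sum_mmGame]
  simp only [userSet_coalitionAssignment]
  refine congrFun (Finset.sum_subset (subset_univ _) fun S _ hS => ?_).symm T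
  rw [mem_biUnion_iff_userSet_meets, userSet_coalitionAssignment, inter_univ,
    not_nonempty_iff_eq_empty] at hS
  ext T'
  simp [mmGame, hS]

end Representation

theorem allGamesRep_iff_fullSpan_general {N : Type} [Fintype N] [DecidableEq N]
    (C : Finset (Finset N)) :
    (∀ v : {T : Finset N // T ∈ C} → ℝ,
      ∃ (K : Type) (ψ : N → Finset K) (γ : K → ℝ), IsRep C v ψ γ) ↔
    FullSpan C := by
  rw [fullSpan_iff_span_mmGame_eq_top, Submodule.eq_top_iff']
  refine ⟨fun hrep v => ?_, fun hspan v => ?_⟩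
  · obtain ⟨K, ψ, γ, hv⟩ := hrep v
    exact hv.mem_span_mmGame
  · obtain ⟨c, rfl⟩ := (Submodule.mem_span_range_iff_exists_fun ℝ).1 (hspan v)
    exact ⟨_, _, _, isRep_coalitionAssignment C c⟩

/-- Every game `v : C → ℝ` has a representation if and only if
`C` has full span. -/
theorem allGamesRep_iff_fullSpan {N : Type} [Fintype N] [DecidableEq N]
    [Nonempty N] (C : Finset (Finset N)) (hCne : C.Nonempty)
    (hmem : ∀ S ∈ C, S.Nonempty) (hcover : ∀ n : N, ∃ S ∈ C, n ∈ S) :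
    (∀ v : {T : Finset N // T ∈ C} → ℝ,
      ∃ (K : Type) (ψ : N → Finset K) (γ : K → ℝ), IsRep C v ψ γ) ↔
    FullSpan C :=
  allGamesRep_iff_fullSpan_general C
end
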